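/- Let Θ and Y be measurable spaces, ν a probability on Θ, τ : Θ × Y → Y measurable, and l̄ a ν-Jacobian. If a probability ρ on Y is stationary with respect to (l̄, ν, τ), then the probability π on Θ × Y defined by dπ = l̄(θ,y) dν(θ) dρ(y) is holonomic with respect to τ, and the y-marginal of π equals ρ. -/

import Mathlib

open MeasureTheory

/-- A probability `π` on `Θ × Y` is holonomic with respect to the IFS `τ`. -/
def IsHolonomic {Θ Y : Type*} [MeasurableSpace Θ] [MeasurableSpace Y]
    (τ : Θ → Y → Y) (π : Measure (Θ × Y)) : Prop :=
  ∀ g : Y → ℝ, Measurable g → (∃ C, ∀ y, |g y| ≤ C) →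
    ∫ p, g p.2 ∂π = ∫ p, g (τ p.1 p.2) ∂π

/-- A probability `ρ` on `Y` is stationary with respect to `(l̄, ν, τ)`. -/
def IsStationary' {Θ Y : Type*} [MeasurableSpace Θ] [MeasurableSpace Y]
    (lbar : Θ → Y → ℝ) (ν : Measure Θ) (τ : Θ → Y → Y) (ρ : Measure Y) : Prop :=
  ∀ g : Y → ℝ, Measurable g → (∃ C, ∀ y, |g y| ≤ C) →
    ∫ y, ∫ θ, lbar θ y * g (τ θ y) ∂ν ∂ρ = ∫ y, g y ∂ρ

/-!
Because `∫ l̄(θ, y) dν(θ) = 1`, Tonelli shows that the `y`-marginal of `π` is `ρ`; hence `π` is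
finite and `∫ g(y) dπ = ∫ g dρ`. Fubini rewrites `∫ g(τ_θ y) dπ` as
`∫∫ l̄(θ, y) g(τ_θ y) dν(θ) dρ(y)`, which is `∫ g dρ` by stationarity.
-/

section

variable {Θ Y : Type*} [MeasurableSpace Θ] [MeasurableSpace Y]

theorem lintegral_ofReal_eq_one_of_integral_eq_one {ν : Measure Θ} {f : Θ → ℝ}
    (hf0 : ∀ θ, 0 ≤ f θ) (hf : ∫ θ, f θ ∂ν = 1) : ∫⁻ θ, ENNReal.ofReal (f θ) ∂ν = 1 := by
  have hint : Integrable f ν := Integrable.of_integral_ne_zero (by simp [hf])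
  rw [← ofReal_integral_eq_lintegral_ofReal hint (Filter.Eventually.of_forall hf0), hf,
    ENNReal.ofReal_one]

variable (ν : Measure Θ) [SFinite ν] (ρ : Measure Y) [SFinite ρ]

theorem map_snd_withDensity_prod_eq_self {f : Θ × Y → ENNReal} (hf : Measurable f)
    (hf1 : ∀ y, ∫⁻ θ, f (θ, y) ∂ν = 1) : ((ν.prod ρ).withDensity f).map Prod.snd = ρ := by
  ext s hs
  rw [Measure.map_apply measurable_snd hs, withDensity_apply _ (measurable_snd hs),
    ← Set.univ_prod, ← Measure.prod_restrict, Measure.restrict_univ, lintegral_prod_symm' _ hf]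
  simp [hf1]

theorem integral_withDensity_ofReal_prod {f : Θ × Y → ℝ} (hf : Measurable f)
    (hf0 : ∀ p, 0 ≤ f p) {F : Θ × Y → ℝ}
    (hF : Integrable F ((ν.prod ρ).withDensity fun p => ENNReal.ofReal (f p))) :
    ∫ p, F p ∂(ν.prod ρ).withDensity (fun p => ENNReal.ofReal (f p)) =
      ∫ y, ∫ θ, f (θ, y) * F (θ, y) ∂ν ∂ρ := by
  have hlt : ∀ᵐ p ∂ν.prod ρ, ENNReal.ofReal (f p) < ⊤ := .of_forall fun _ => ENNReal.ofReal_lt_top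
  have hsmul : (fun p => (ENNReal.ofReal (f p)).toReal • F p) = fun p => f p * F p := by
    ext p
    simp [hf0 p]
  rw [integrable_withDensity_iff_integrable_smul' hf.ennreal_ofReal hlt, hsmul] at hF
  rw [integral_withDensity_eq_integral_toReal_smul hf.ennreal_ofReal hlt, hsmul]
  exact integral_prod_symm _ hF

end

/-- if `ρ` is stationary with respect to `(l̄, ν, τ)` then
`dπ = l̄(θ,y) dν(θ) dρ(y)` is holonomic and its `y`-marginal is `ρ`. -/
theorem stationary_gives_holonomic {Θ Y : Type*} [MeasurableSpace Θ] [MeasurableSpace Y]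
    (ν : Measure Θ) [IsProbabilityMeasure ν]
    (τ : Θ → Y → Y) (hτ : Measurable fun p : Θ × Y => τ p.1 p.2)
    (lbar : Θ → Y → ℝ) (hlbar : Measurable fun p : Θ × Y => lbar p.1 p.2)
    (hlbarnn : ∀ θ y, 0 ≤ lbar θ y) (hJ : ∀ y, ∫ θ, lbar θ y ∂ν = 1)
    (ρ : Measure Y) [IsProbabilityMeasure ρ]
    (hstat : IsStationary' lbar ν τ ρ) :
    IsHolonomic τ ((ν.prod ρ).withDensity fun p => ENNReal.ofReal (lbar p.1 p.2)) ∧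
      Measure.map Prod.snd
        ((ν.prod ρ).withDensity fun p => ENNReal.ofReal (lbar p.1 p.2)) = ρ := by
  set π := (ν.prod ρ).withDensity fun p => ENNReal.ofReal (lbar p.1 p.2)
  have hmarg : π.map Prod.snd = ρ :=
    map_snd_withDensity_prod_eq_self ν ρ hlbar.ennreal_ofReal fun y =>
      lintegral_ofReal_eq_one_of_integral_eq_one (fun θ => hlbarnn θ y) (hJ y)
  have : IsFiniteMeasure π := by
    have : IsFiniteMeasure (π.map Prod.snd) := hmarg ▸ inferInstance
    exact Measure.isFiniteMeasure_of_map measurable_snd.aemeasurable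
  refine ⟨fun g hg ⟨C, hC⟩ => ?_, hmarg⟩
  have hgτ : Integrable (fun p : Θ × Y => g (τ p.1 p.2)) π :=
    .of_bound (hg.comp hτ).aestronglyMeasurable C (.of_forall fun p => hC _)
  rw [← integral_map measurable_snd.aemeasurable hg.aestronglyMeasurable, hmarg,
    integral_withDensity_ofReal_prod ν ρ hlbar (fun p => hlbarnn p.1 p.2) hgτ, hstat g hg ⟨C, hC⟩]
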